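/- Let a > 0, let g(x) = e^{a(x-1)}, and let S_d(x) = e^{-a}·I_0(a) + 2·e^{-a}·∑_{k=1}^{d} I_k(a)·T_k(x) be the degree-d Chebyshev partial sum of g. Then sup_{x ∈ [-1,1]} |S_d(x)| ≤ 1 and sup_{x ∈ [-1,1]} |g(x) - S_d(x)| ≤ 2·e^{-a}·∑_{k=d+1}^{∞} I_k(a). -/

import Mathlib

/-!
Writing `e^{a cos θ} = exp z · exp z̄` with `z = (a/2) e^{iθ}` and multiplying out the two
exponential series, the terms `z^p z̄^q / (p! q!)` with `p - q = n` add up to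
`I_{|n|}(a) e^{inθ}`. Taking real parts gives the Jacobi–Anger expansion
`e^{a cos θ} = I₀(a) + 2 ∑_{k ≥ 1} I_k(a) cos kθ`, i.e. with `x = cos θ` the Chebyshev expansion
`e^{ax} = I₀(a) + 2 ∑_{k ≥ 1} I_k(a) T_k(x)`. For `a ≥ 0` its coefficients are nonnegative and,
at `x = 1`, add up to `e^a`; as `|T_k| ≤ 1` on `[-1, 1]`, both bounds follow by comparing `S_d`
and the tail of the expansion with this series of coefficients.
-/

/-- The modified Bessel function of the first kind `I_k(a)`, defined by its
everywhere-convergent power series. -/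
noncomputable def besselI (k : ℕ) (a : ℝ) : ℝ :=
  ∑' m : ℕ, (a / 2) ^ (k + 2 * m) / ((m.factorial : ℝ) * (m + k).factorial)

/-- The degree-`d` Chebyshev partial sum of `g(x) = exp (a*(x-1))`:
`S_d(x) = e^{-a} I₀(a) + 2 e^{-a} ∑_{k=1}^{d} I_k(a) T_k(x)`. -/
noncomputable def chebPartialSum (a : ℝ) (d : ℕ) (x : ℝ) : ℝ :=
  Real.exp (-a) * besselI 0 a +
    2 * Real.exp (-a) *
      ∑ k ∈ Finset.range d, besselI (k + 1) a * (Polynomial.Chebyshev.T ℝ (k + 1)).eval x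

open Real Polynomial.Chebyshev

theorem Complex.hasSum_exp_mul_exp (z w : ℂ) :
    HasSum (fun pq : ℕ × ℕ => z ^ pq.1 / pq.1.factorial * (w ^ pq.2 / pq.2.factorial))
      (Complex.exp z * Complex.exp w) := by
  have hexp (u : ℂ) : HasSum (fun p : ℕ => u ^ p / p.factorial) (Complex.exp u) := by
    simpa [Complex.exp_eq_exp_ℂ] using NormedSpace.expSeries_div_hasSum_exp u
  have hnorm (u : ℂ) : Summable (fun p : ℕ => ‖u ^ p / p.factorial‖) := by
    simpa using Real.summable_pow_div_factorial ‖u‖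
  have hsum : Summable fun pq : ℕ × ℕ => z ^ pq.1 / pq.1.factorial * (w ^ pq.2 / pq.2.factorial) :=
    summable_mul_of_summable_norm (f := fun p : ℕ => z ^ p / p.factorial)
      (g := fun p : ℕ => w ^ p / p.factorial) (hnorm z) (hnorm w)
  exact HasSum.mul (f := fun p : ℕ => z ^ p / p.factorial) (g := fun p : ℕ => w ^ p / p.factorial)
    (hexp z) (hexp w) hsum

/-- The real part of `(z ^ p / p!) * (conj z ^ q / q!)` for `z = (a / 2) e^{iθ}`. -/
noncomputable def expCosTerm (a θ : ℝ) (pq : ℕ × ℕ) : ℝ :=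
  (a / 2) ^ (pq.1 + pq.2) / (pq.1.factorial * pq.2.factorial) * cos ((pq.1 - pq.2 : ℝ) * θ)

theorem hasSum_expCosTerm (a θ : ℝ) : HasSum (expCosTerm a θ) (exp (a * cos θ)) := by
  have hexp : Complex.exp ((a / 2 : ℝ) * Complex.exp (θ * Complex.I))
      * Complex.exp ((a / 2 : ℝ) * Complex.exp (-θ * Complex.I)) = (exp (a * cos θ) : ℂ) := by
    rw [← Complex.exp_add, Complex.ofReal_exp]
    push_cast
    rw [Complex.cos]
    ring_nf
  have hterm (p q : ℕ) :
      ((a / 2 : ℝ) * Complex.exp (θ * Complex.I)) ^ p / p.factorial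
        * (((a / 2 : ℝ) * Complex.exp (-θ * Complex.I)) ^ q / q.factorial)
      = (((a / 2) ^ (p + q) / (p.factorial * q.factorial) : ℝ) : ℂ)
        * Complex.exp (((p - q : ℝ) * θ : ℝ) * Complex.I) := by
    have : Complex.exp (((p - q : ℝ) * θ : ℝ) * Complex.I)
        = Complex.exp (p * (θ * Complex.I)) * Complex.exp (q * (-θ * Complex.I)) := by
      rw [← Complex.exp_add]; push_cast; ring_nf
    rw [mul_pow, mul_pow, ← Complex.exp_nat_mul, ← Complex.exp_nat_mul, this]
    push_cast
    ring
  have h := Complex.hasSum_re (Complex.hasSum_exp_mul_exp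
    ((a / 2 : ℝ) * Complex.exp (θ * Complex.I)) ((a / 2 : ℝ) * Complex.exp (-θ * Complex.I)))
  simp only [hexp, hterm, Complex.re_ofReal_mul, Complex.exp_ofReal_mul_I_re,
    Complex.ofReal_re] at h
  exact h

def diffMinEquiv : ℤ × ℕ ≃ ℕ × ℕ where
  toFun nm := (nm.2 + nm.1.toNat, nm.2 + (-nm.1).toNat)
  invFun pq := ((pq.1 : ℤ) - pq.2, min pq.1 pq.2)
  left_inv nm := by ext <;> simp; omega
  right_inv pq := by ext <;> (simp; omega)

theorem expCosTerm_diffMinEquiv (a θ : ℝ) (n : ℤ) (m : ℕ) :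
    expCosTerm a θ (diffMinEquiv (n, m))
      = (a / 2) ^ (n.natAbs + 2 * m) / (m.factorial * (m + n.natAbs).factorial) * cos (n * θ) := by
  rcases n with k | k
  · have hneg : (-(k : ℤ)).toNat = 0 := by omega
    simp only [expCosTerm, diffMinEquiv, Equiv.coe_fn_mk, Int.ofNat_eq_natCast, Int.toNat_natCast,
      Int.natAbs_natCast, hneg, add_zero, show m + k + m = k + 2 * m by ring]
    push_cast
    ring_nf
  · have hneg : (-Int.negSucc k).toNat = k + 1 := by omega
    simp only [expCosTerm, diffMinEquiv, Equiv.coe_fn_mk, Int.toNat_negSucc, Int.natAbs_negSucc,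
      Nat.succ_eq_add_one, hneg, add_zero, Int.cast_negSucc,
      show m + (m + (k + 1)) = k + 1 + 2 * m by ring]
    push_cast
    ring_nf

theorem hasSum_besselI_natAbs_mul_cos (a θ : ℝ) :
    HasSum (fun n : ℤ => besselI n.natAbs a * cos (n * θ)) (exp (a * cos θ)) := by
  have h := diffMinEquiv.hasSum_iff.mpr (hasSum_expCosTerm a θ)
  refine h.prod_fiberwise fun n => ?_
  have hfiber := h.summable.prod_factor n
  simp only [Function.comp_apply, expCosTerm_diffMinEquiv] at hfiber
  simpa only [Function.comp_apply, expCosTerm_diffMinEquiv, besselI, ← tsum_mul_right]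
    using hfiber.hasSum

theorem HasSum.two_nsmul_nat_succ_of_even {α : Type*} [AddCommGroup α] [TopologicalSpace α]
    [IsTopologicalAddGroup α] {f : ℤ → α} {s : α} (hf : HasSum f s) (heven : f.Even) :
    HasSum (fun n : ℕ => 2 • f (n + 1)) (s - f 0) := by
  have h := hf.nat_add_neg
  simp only [heven _, ← two_nsmul] at h
  convert (hasSum_nat_add_iff' 1).mpr h using 1
  · simp
  · simp [two_nsmul]

theorem hasSum_besselI_succ_mul_cos (a θ : ℝ) :
    HasSum (fun k : ℕ => besselI (k + 1) a * cos ((k + 1) * θ))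
      ((exp (a * cos θ) - besselI 0 a) / 2) := by
  have h := ((hasSum_besselI_natAbs_mul_cos a θ).two_nsmul_nat_succ_of_even fun n => by
    simp [neg_mul, cos_neg]).div_const 2
  have hnatAbs (k : ℕ) : ((k : ℤ) + 1).natAbs = k + 1 := by omega
  simpa [nsmul_eq_mul, hnatAbs] using h

theorem hasSum_besselI_succ (a : ℝ) :
    HasSum (fun k : ℕ => besselI (k + 1) a) ((exp a - besselI 0 a) / 2) := by
  simpa using hasSum_besselI_succ_mul_cos a 0

theorem hasSum_besselI_succ_mul_eval_T (a : ℝ) {x : ℝ} (hx : x ∈ Set.Icc (-1 : ℝ) 1) :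
    HasSum (fun k : ℕ => besselI (k + 1) a * (T ℝ (k + 1)).eval x)
      ((exp (a * x) - besselI 0 a) / 2) := by
  have hcos : cos (arccos x) = x := cos_arccos hx.1 hx.2
  have hT (k : ℕ) : (T ℝ (k + 1)).eval x = cos ((k + 1) * arccos x) := by
    simpa [hcos] using T_real_cos (arccos x) (k + 1)
  simpa [hT, hcos] using hasSum_besselI_succ_mul_cos a (arccos x)

theorem besselI_nonneg {a : ℝ} (ha : 0 ≤ a) (k : ℕ) : 0 ≤ besselI k a :=
  tsum_nonneg fun m => by positivity

theorem abs_besselI_succ_mul_eval_T_le {a x : ℝ} (ha : 0 ≤ a) (hx : x ∈ Set.Icc (-1 : ℝ) 1)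
    (k : ℕ) :
    |besselI (k + 1) a * (T ℝ (k + 1)).eval x| ≤ besselI (k + 1) a := by
  rw [abs_mul, abs_of_nonneg (besselI_nonneg ha _)]
  exact mul_le_of_le_one_right (besselI_nonneg ha _) (abs_eval_T_real_le_one _ (abs_le.mpr hx))

theorem abs_chebPartialSum_le_one {a x : ℝ} (ha : 0 ≤ a) (d : ℕ) (hx : x ∈ Set.Icc (-1 : ℝ) 1) :
    |chebPartialSum a d x| ≤ 1 := by
  have hsum := hasSum_besselI_succ a
  calc |chebPartialSum a d x|
      ≤ exp (-a) * besselI 0 a + 2 * exp (-a) * ∑ k ∈ Finset.range d, besselI (k + 1) a := by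
        rw [chebPartialSum]
        refine (abs_add_le _ _).trans ?_
        rw [abs_mul, abs_mul, abs_of_nonneg (exp_pos _).le, abs_of_nonneg (besselI_nonneg ha 0),
          abs_of_nonneg (by positivity : (0 : ℝ) ≤ 2 * exp (-a))]
        gcongr
        exact (Finset.abs_sum_le_sum_abs _ _).trans
          (Finset.sum_le_sum fun k _ => abs_besselI_succ_mul_eval_T_le ha hx k)
    _ ≤ exp (-a) * besselI 0 a + 2 * exp (-a) * ((exp a - besselI 0 a) / 2) := by
        gcongr
        exact sum_le_hasSum _ (fun k _ => besselI_nonneg ha _) hsum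
    _ = 1 := by
        rw [← exp_zero, ← neg_add_cancel a, exp_add]
        ring

theorem abs_exp_sub_chebPartialSum_le {a x : ℝ} (ha : 0 ≤ a) (d : ℕ)
    (hx : x ∈ Set.Icc (-1 : ℝ) 1) :
    |exp (a * (x - 1)) - chebPartialSum a d x|
      ≤ 2 * exp (-a) * ∑' k : ℕ, besselI (d + 1 + k) a := by
  let c (k : ℕ) : ℝ := besselI (k + 1) a * (T ℝ (k + 1)).eval x
  have hc : HasSum c ((exp (a * x) - besselI 0 a) / 2) := hasSum_besselI_succ_mul_eval_T a hx
  have hexp : exp (a * x) = besselI 0 a + 2 * (∑ k ∈ Finset.range d, c k + ∑' k, c (k + d)) := by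
    rw [hc.summable.sum_add_tsum_nat_add d, hc.tsum_eq]
    ring
  have htail : exp (a * (x - 1)) - chebPartialSum a d x = 2 * exp (-a) * ∑' k, c (k + d) := by
    rw [show a * (x - 1) = -a + a * x by ring, exp_add, hexp, chebPartialSum]
    ring
  have hbound : Summable fun k => besselI (d + 1 + k) a :=
    ((summable_nat_add_iff d).mpr (hasSum_besselI_succ a).summable).congr fun k => by
      rw [show k + d + 1 = d + 1 + k by omega]
  rw [htail, abs_mul, abs_of_nonneg (by positivity : (0 : ℝ) ≤ 2 * exp (-a))]
  gcongr
  refine tsum_of_norm_bounded (f := fun k => c (k + d)) hbound.hasSum fun k => ?_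
  rw [Real.norm_eq_abs, show d + 1 + k = k + d + 1 by omega]
  exact abs_besselI_succ_mul_eval_T_le ha hx (k + d)

/-- The Chebyshev partial sum `S_d` of `g(x) = exp (a*(x-1))` is bounded by `1` on `[-1,1]`,
and approximates `g` there to within the Bessel tail `2 e^{-a} ∑_{k=d+1}^∞ I_k(a)`. -/
theorem stmt6 (a : ℝ) (ha : 0 < a) (d : ℕ) :
    (∀ x ∈ Set.Icc (-1 : ℝ) 1, |chebPartialSum a d x| ≤ 1) ∧
      ∀ x ∈ Set.Icc (-1 : ℝ) 1,
        |Real.exp (a * (x - 1)) - chebPartialSum a d x| ≤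
          2 * Real.exp (-a) * ∑' k : ℕ, besselI (d + 1 + k) a :=
  ⟨fun _ hx => abs_chebPartialSum_le_one ha.le d hx,
    fun _ hx => abs_exp_sub_chebPartialSum_le ha.le d hx⟩
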